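/- Let 0 → M₁ → E → M₂ → 0 be a short exact sequence of holomorphic vector bundles on a compact complex space X with M₁, M₂ line bundles, and suppose H⁰(M₁ ⊗ M₂^∨) = 0, H⁰(M₂ ⊗ M₁^∨) = 0, dim H⁰(O_X) = 1, and the extension is non-split. Then E is simple, i.e. every endomorphism of E is a scalar multiple of the identity. -/

import Mathlib

/-!
Restricting an endomorphism `φ` of `E` to `M₁` and projecting to `M₂` gives a map `M₁ → M₂`,
hence zero, so `φ` preserves `M₁` and acts there as a scalar `a`. Then `φ - a` kills `M₁` and
factors as `p ≫ h` with `h : M₂ → E`. If `h ≫ p` were a nonzero scalar, a multiple of `h` would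
split the sequence; so `h ≫ p = 0`, `h` factors through `M₁`, and `Hom(M₂, M₁) = 0` forces `h = 0`.
-/

open CategoryTheory Limits

namespace CategoryTheory

variable {K : Type*} [Field K] {C : Type*} [Category C] [Preadditive C] [Linear K C]
  {M1 E M2 : C} {i : M1 ⟶ E} {p : E ⟶ M2}

theorem exists_comp_eq_smul_of_hom_eq_zero
    (hker : ∀ {X : C} (f : X ⟶ E), f ≫ p = 0 → ∃ g : X ⟶ M1, g ≫ i = f)
    (hEnd1 : ∀ f : M1 ⟶ M1, ∃ c : K, f = c • 𝟙 M1)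
    (hHom12 : ∀ f : M1 ⟶ M2, f = 0) (φ : E ⟶ E) :
    ∃ a : K, i ≫ φ = a • i := by
  obtain ⟨g, hg⟩ := hker (i ≫ φ) (by simpa using hHom12 (i ≫ φ ≫ p))
  obtain ⟨a, rfl⟩ := hEnd1 g
  exact ⟨a, by rw [← hg, Linear.smul_comp, Category.id_comp]⟩

theorem comp_eq_zero_of_not_exists_section
    (hEnd2 : ∀ f : M2 ⟶ M2, ∃ c : K, f = c • 𝟙 M2)
    (hnonsplit : ¬ ∃ s : M2 ⟶ E, s ≫ p = 𝟙 M2) (h : M2 ⟶ E) :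
    h ≫ p = 0 := by
  obtain ⟨b, hb⟩ := hEnd2 (h ≫ p)
  rcases eq_or_ne b 0 with rfl | hb0
  · simpa using hb
  · refine absurd ⟨b⁻¹ • h, ?_⟩ hnonsplit
    rw [Linear.smul_comp, hb, smul_smul, inv_mul_cancel₀ hb0, one_smul]

theorem hom_eq_zero_of_not_exists_section
    (hker : ∀ {X : C} (f : X ⟶ E), f ≫ p = 0 → ∃ g : X ⟶ M1, g ≫ i = f)
    (hEnd2 : ∀ f : M2 ⟶ M2, ∃ c : K, f = c • 𝟙 M2)
    (hHom21 : ∀ f : M2 ⟶ M1, f = 0)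
    (hnonsplit : ¬ ∃ s : M2 ⟶ E, s ≫ p = 𝟙 M2) (h : M2 ⟶ E) :
    h = 0 := by
  obtain ⟨k, rfl⟩ := hker h (comp_eq_zero_of_not_exists_section hEnd2 hnonsplit h)
  rw [hHom21 k, zero_comp]

end CategoryTheory

theorem stmt8_general (C : Type*) [Category C] [Preadditive C] [Linear ℂ C]
    (M1 E M2 : C) (i : M1 ⟶ E) (p : E ⟶ M2)
    (hker : ∀ {X : C} (f : X ⟶ E), f ≫ p = 0 → ∃ g : X ⟶ M1, g ≫ i = f)
    (hcoker : ∀ {X : C} (f : E ⟶ X), i ≫ f = 0 → ∃ g : M2 ⟶ X, p ≫ g = f)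
    (hEnd1 : ∀ f : M1 ⟶ M1, ∃ c : ℂ, f = c • 𝟙 M1)
    (hEnd2 : ∀ f : M2 ⟶ M2, ∃ c : ℂ, f = c • 𝟙 M2)
    (hHom21 : ∀ f : M2 ⟶ M1, f = 0) (hHom12 : ∀ f : M1 ⟶ M2, f = 0)
    (hnonsplit : ¬ ∃ s : M2 ⟶ E, s ≫ p = 𝟙 M2) :
    ∀ φ : E ⟶ E, ∃ c : ℂ, φ = c • 𝟙 E := by
  intro φ
  obtain ⟨a, ha⟩ := exists_comp_eq_smul_of_hom_eq_zero hker hEnd1 hHom12 φ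
  obtain ⟨h, hh⟩ := hcoker (φ - a • 𝟙 E) (by rw [Preadditive.comp_sub, ha, Linear.comp_smul,
    Category.comp_id, sub_self])
  rw [hom_eq_zero_of_not_exists_section hker hEnd2 hHom21 hnonsplit h, comp_zero] at hh
  exact ⟨a, sub_eq_zero.mp hh.symm⟩

/-- Proposition 3.6 (2),(4), abstracted: a non-split extension
`0 → M₁ → E → M₂ → 0` of line bundles with `Hom(M₂,M₁) = 0`, `Hom(M₁,M₂) = 0`
(i.e. `H⁰(M₁⊗M₂^∨) = 0 = H⁰(M₂⊗M₁^∨)`) and one-dimensional endomorphism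
algebras of `M₁`, `M₂` (i.e. `dim H⁰(O) = 1`) has simple central term `E`:
every endomorphism of `E` is a scalar multiple of the identity.  The category
`C` models holomorphic vector bundles on the compact complex space; `hker` and
`hcoker` express exactness of the sequence. -/
theorem stmt8 (C : Type*) [Category C] [Preadditive C] [Linear ℂ C]
    (M1 E M2 : C) (i : M1 ⟶ E) (p : E ⟶ M2)
    (hip : i ≫ p = 0) (hmono : Mono i) (hepi : Epi p)
    (hker : ∀ {X : C} (f : X ⟶ E), f ≫ p = 0 → ∃ g : X ⟶ M1, g ≫ i = f)
    (hcoker : ∀ {X : C} (f : E ⟶ X), i ≫ f = 0 → ∃ g : M2 ⟶ X, p ≫ g = f)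
    (hEnd1 : ∀ f : M1 ⟶ M1, ∃ c : ℂ, f = c • 𝟙 M1)
    (hEnd2 : ∀ f : M2 ⟶ M2, ∃ c : ℂ, f = c • 𝟙 M2)
    (hHom21 : ∀ f : M2 ⟶ M1, f = 0) (hHom12 : ∀ f : M1 ⟶ M2, f = 0)
    (hnonsplit : ¬ ∃ s : M2 ⟶ E, s ≫ p = 𝟙 M2) :
    ∀ φ : E ⟶ E, ∃ c : ℂ, φ = c • 𝟙 E :=
  stmt8_general C M1 E M2 i p hker hcoker hEnd1 hEnd2 hHom21 hHom12 hnonsplit
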